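/- arXiv:2203.00544 — 3 statements merged into one kernel-verified Lean document; each statement's English description precedes it below -/
import Mathlib

section
/- For every school c in a school-choice instance, the minority-reserve choice function C^MR_c is substitutable: for every set of students S1, every student s ∈ C^MR_c(S1), and every set S2 with s ∈ S2 ⊆ S1, one has s ∈ C^MR_c(S2). -/
/-!
Common formalization of school-choice instances with reserved seats
(minority reserve, joint seat allocation, discovery program).

Conventions:
* `prio c s` is the priority rank of student `s` at school `c`
  (smaller value = higher priority); injectivity encodes a strict priority order.
* `pref s o` is the preference rank of outcome `o : Option C` for student `s`
  (smaller value = more preferred); `none` denotes being unmatched, and a school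
  `c` is acceptable to `s` iff `pref s (some c) < pref s none`.
-/

open Finset

structure SchoolChoice (S C : Type*) [Fintype S] [DecidableEq S] [Fintype C] [DecidableEq C] where
  /-- the set of disadvantaged (minority) students; the rest are advantaged -/
  dis : Finset S
  /-- preference rank of each outcome (school or `none` = unmatched) for each student -/
  pref : S → Option C → ℕ
  pref_inj : ∀ s, Function.Injective (pref s)
  /-- priority rank of each student at each school (lower = higher priority) -/
  prio : C → S → ℕ
  prio_inj : ∀ c, Function.Injective (prio c)
  /-- quota of each school -/
  q : C → ℕ
  /-- reservation quota of each school -/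
  qR : C → ℕ
  qR_le : ∀ c, qR c ≤ q c

namespace SchoolChoice

variable {S C : Type*} [Fintype S] [DecidableEq S] [Fintype C] [DecidableEq C]

/-- `max(T, >_c, k)`: the `min(k, |T|)` highest-priority students of `T` at school `c`. -/
def maxSet (I : SchoolChoice S C) (c : C) (T : Finset S) (k : ℕ) : Finset S :=
  T.filter fun s => (T.filter fun t => I.prio c t < I.prio c s).card < k

/-- baseline choice function `C^BASE_c` -/
def CBASE (I : SchoolChoice S C) (c : C) (T : Finset S) : Finset S :=
  I.maxSet c T (I.q c)

/-- `S1^R` of the minority-reserve choice function -/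
def mrRes (I : SchoolChoice S C) (c : C) (T : Finset S) : Finset S :=
  I.maxSet c (T ∩ I.dis) (I.qR c)

/-- minority-reserve choice function `C^MR_c` -/
def CMR (I : SchoolChoice S C) (c : C) (T : Finset S) : Finset S :=
  I.mrRes c T ∪ I.maxSet c (T \ I.mrRes c T) (I.q c - (I.mrRes c T).card)

/-- `S1^G` of the joint-seat-allocation choice function -/
def jsaGen (I : SchoolChoice S C) (c : C) (T : Finset S) : Finset S :=
  I.maxSet c T (I.q c - I.qR c)

/-- `S1^R` of the joint-seat-allocation choice function -/
def jsaRes (I : SchoolChoice S C) (c : C) (T : Finset S) : Finset S :=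
  I.maxSet c ((T ∩ I.dis) \ I.jsaGen c T) (I.qR c)

/-- joint-seat-allocation choice function `C^JSA_c` -/
def CJSA (I : SchoolChoice S C) (c : C) (T : Finset S) : Finset S :=
  I.jsaGen c T ∪ I.jsaRes c T ∪
    I.maxSet c (T \ (I.jsaGen c T ∪ I.jsaRes c T))
      (I.q c - (I.jsaGen c T ∪ I.jsaRes c T).card)

/-- school `c` is acceptable to student `s` -/
def acceptable (I : SchoolChoice S C) (s : S) (c : C) : Prop :=
  I.pref s (some c) < I.pref s none

/-- `μ(c)`: the set of students assigned to school `c` by `μ` -/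
def assigned (I : SchoolChoice S C) (μ : S → Option C) (c : C) : Finset S :=
  Finset.univ.filter fun s => μ s = some c

/-- `μ` is a matching: students are assigned only acceptable schools, quotas respected -/
def IsMatching (I : SchoolChoice S C) (μ : S → Option C) : Prop :=
  (∀ s c, μ s = some c → I.acceptable s c) ∧ ∀ c, (I.assigned μ c).card ≤ I.q c

/-- `μ` is stable w.r.t. the choice functions `Ch`: it is a matching and no pair
`(s, c)` with `c` acceptable to `s` satisfies `c >_s μ(s)` and `s ∈ Ch c (μ(c) ∪ {s})`. -/
def IsStable (I : SchoolChoice S C) (Ch : C → Finset S → Finset S) (μ : S → Option C) : Prop :=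
  I.IsMatching μ ∧
    ∀ s c, I.acceptable s c → I.pref s (some c) < I.pref s (μ s) →
      s ∉ Ch c (insert s (I.assigned μ c))

/-- `μ` is the student-optimal stable matching w.r.t. `Ch`:
stable and weakly preferred by every student to every stable matching. -/
def IsOptStable (I : SchoolChoice S C) (Ch : C → Finset S → Finset S) (μ : S → Option C) :
    Prop :=
  I.IsStable Ch μ ∧ ∀ μ', I.IsStable Ch μ' → ∀ s, I.pref s (μ s) ≤ I.pref s (μ' s)

/-! Restricted (sub)instances, used by the three-stage discovery program: only students
in `A` participate and school `c` has quota `q' c`, with baseline (responsive) choice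
functions. -/

def IsMatchingOn (I : SchoolChoice S C) (A : Finset S) (q' : C → ℕ) (μ : S → Option C) :
    Prop :=
  (∀ s, s ∉ A → μ s = none) ∧
    (∀ s c, μ s = some c → I.acceptable s c) ∧ ∀ c, (I.assigned μ c).card ≤ q' c

def IsStableOn (I : SchoolChoice S C) (A : Finset S) (q' : C → ℕ) (μ : S → Option C) : Prop :=
  I.IsMatchingOn A q' μ ∧
    ∀ s ∈ A, ∀ c : C, I.acceptable s c → I.pref s (some c) < I.pref s (μ s) →
      s ∉ I.maxSet c (insert s (I.assigned μ c)) (q' c)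

def IsOptStableOn (I : SchoolChoice S C) (A : Finset S) (q' : C → ℕ) (μ : S → Option C) :
    Prop :=
  I.IsStableOn A q' μ ∧
    ∀ μ', I.IsStableOn A q' μ' → ∀ s ∈ A, I.pref s (μ s) ≤ I.pref s (μ' s)

/-- `μ` is the discovery-program matching: the union of the three stage matchings
`μ1` (general seats, all students), `μ2` (reserved seats, unmatched disadvantaged
students), `μ3` (vacant reserved seats, unmatched advantaged students). -/
def IsDisc (I : SchoolChoice S C) (μ : S → Option C) : Prop :=
  ∃ μ1 μ2 μ3 : S → Option C,
    I.IsOptStableOn Finset.univ (fun c => I.q c - I.qR c) μ1 ∧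
    I.IsOptStableOn (I.dis.filter fun s => μ1 s = none) I.qR μ2 ∧
    I.IsOptStableOn ((Finset.univ \ I.dis).filter fun s => μ1 s = none)
      (fun c => I.qR c - (I.assigned μ2 c).card) μ3 ∧
    ∀ s, μ s = Option.elim (μ1 s) (Option.elim (μ2 s) (μ3 s) some) some

/-- `(s, c)` is a blocking pair of `μ` for disadvantaged students -/
def BlockDis (I : SchoolChoice S C) (μ : S → Option C) (s : S) (c : C) : Prop :=
  s ∈ I.dis ∧ I.acceptable s c ∧ I.pref s (some c) < I.pref s (μ s) ∧
    ∃ s' ∈ I.assigned μ c, s' ∈ I.dis ∧ I.prio c s < I.prio c s'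

/-- `(s, c)` is a blocking pair of `μ` for advantaged students -/
def BlockAdv (I : SchoolChoice S C) (μ : S → Option C) (s : S) (c : C) : Prop :=
  s ∉ I.dis ∧ I.acceptable s c ∧ I.pref s (some c) < I.pref s (μ s) ∧
    ∃ s' ∈ I.assigned μ c, s' ∉ I.dis ∧ I.prio c s < I.prio c s'

/-- `(s, c)` is an in-group blocking pair of `μ` -/
def InGroupBlock (I : SchoolChoice S C) (μ : S → Option C) (s : S) (c : C) : Prop :=
  I.BlockDis μ s c ∨ I.BlockAdv μ s c

/-- all schools share a common priority order over the students -/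
def CommonPriority (I : SchoolChoice S C) : Prop :=
  ∀ c c' : C, ∀ t u : S, I.prio c t < I.prio c u ↔ I.prio c' t < I.prio c' u

/-- the reservation quotas are a smart reserve w.r.t. the baseline matching `μBase` -/
def SmartReserve (I : SchoolChoice S C) (μBase : S → Option C) : Prop :=
  ∀ c, (I.assigned μBase c ∩ I.dis).card ≤ I.qR c

end SchoolChoice

/-!
Membership of `s` in `max(T, >_c, k)` survives shrinking `T` to a set still containing `s` and
enlarging `k`, and `|max(T, >_c, k)| = min(k, |T|)` is monotone in `T`. Passing from `S1` to `S2`,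
a reserved student of `S1` therefore stays reserved, and an unreserved one faces the smaller pool
`S2 \ S2^R ⊆ S1 \ S1^R` of competitors for the larger number `q_c - |S2^R| ≥ q_c - |S1^R|` of
remaining seats.
-/

namespace SchoolChoice

variable {S C : Type*} [Fintype S] [DecidableEq S] [Fintype C] [DecidableEq C]
  (I : SchoolChoice S C) (c : C)

def rank (T : Finset S) (s : S) : ℕ :=
  #(T.filter fun t => I.prio c t < I.prio c s)

theorem maxSet_eq_filter_rank (T : Finset S) (k : ℕ) :
    I.maxSet c T k = T.filter fun s => I.rank c T s < k :=
  rfl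

theorem rank_lt_rank {T : Finset S} {a b : S} (ha : a ∈ T) (hab : I.prio c a < I.prio c b) :
    I.rank c T a < I.rank c T b := by
  have hsub : insert a (T.filter fun t => I.prio c t < I.prio c a) ⊆
      T.filter fun t => I.prio c t < I.prio c b := by
    intro x hx
    rcases mem_insert.mp hx with rfl | hx
    · exact mem_filter.mpr ⟨ha, hab⟩
    · obtain ⟨hxT, hxa⟩ := mem_filter.mp hx
      exact mem_filter.mpr ⟨hxT, hxa.trans hab⟩
  have ha' : a ∉ T.filter fun t => I.prio c t < I.prio c a := by simp
  simpa [rank, card_insert_of_notMem ha'] using card_le_card hsub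

theorem rank_injOn (T : Finset S) : Set.InjOn (I.rank c T) T := by
  intro a ha b hb hab
  by_contra hne
  rcases (I.prio_inj c).ne hne |>.lt_or_gt with h | h
  · exact (I.rank_lt_rank c ha h).ne hab
  · exact (I.rank_lt_rank c hb h).ne hab.symm

theorem rank_lt_card {T : Finset S} {a : S} (ha : a ∈ T) : I.rank c T a < #T := by
  have hsub : (T.filter fun t => I.prio c t < I.prio c a) ⊆ T.erase a := fun x hx => by
    obtain ⟨hxT, hxa⟩ := mem_filter.mp hx
    exact mem_erase.mpr ⟨ne_of_apply_ne (I.prio c) hxa.ne, hxT⟩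
  exact (card_le_card hsub).trans_lt (card_erase_lt_of_mem ha)

theorem image_rank (T : Finset S) : T.image (I.rank c T) = range #T := by
  refine eq_of_subset_of_card_le (fun i hi => ?_) ?_
  · obtain ⟨a, ha, rfl⟩ := mem_image.mp hi
    exact mem_range.mpr (I.rank_lt_card c ha)
  · rw [card_range, card_image_of_injOn (I.rank_injOn c T)]

theorem card_maxSet (T : Finset S) (k : ℕ) : #(I.maxSet c T k) = min k #T := by
  have hinj : Set.InjOn (I.rank c T) (I.maxSet c T k) :=
    (I.rank_injOn c T).mono (coe_subset.mpr (filter_subset _ _))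
  have himage : (I.maxSet c T k).image (I.rank c T) = range (min k #T) := by
    rw [maxSet_eq_filter_rank, ← filter_image (p := (· < k)), image_rank]
    ext i
    simp only [mem_filter, mem_range, lt_min_iff]
    omega
  rw [← card_image_of_injOn hinj, himage, card_range]

theorem card_maxSet_le_of_subset {T' T : Finset S} (hT : T' ⊆ T) (k : ℕ) :
    #(I.maxSet c T' k) ≤ #(I.maxSet c T k) := by
  rw [card_maxSet, card_maxSet]
  exact min_le_min_left k (card_le_card hT)

theorem mem_maxSet_of_subset {T' T : Finset S} {k k' : ℕ} {s : S} (hs : s ∈ I.maxSet c T k)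
    (hs' : s ∈ T') (hT : T' ⊆ T) (hk : k ≤ k') : s ∈ I.maxSet c T' k' := by
  rw [maxSet_eq_filter_rank, mem_filter] at hs ⊢
  exact ⟨hs', (card_le_card (filter_subset_filter _ hT)).trans_lt (hs.2.trans_le hk)⟩

variable {I c} {S1 S2 : Finset S}

theorem card_mrRes_le_of_subset (hsub : S2 ⊆ S1) : #(I.mrRes c S2) ≤ #(I.mrRes c S1) :=
  I.card_maxSet_le_of_subset c (inter_subset_inter_right hsub) _

theorem mem_mrRes_of_subset {t : S} (ht : t ∈ I.mrRes c S1) (ht' : t ∈ S2) (hsub : S2 ⊆ S1) :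
    t ∈ I.mrRes c S2 := by
  have htdis : t ∈ I.dis := (mem_inter.mp (filter_subset _ _ ht)).2
  exact I.mem_maxSet_of_subset c ht (mem_inter.mpr ⟨ht', htdis⟩)
    (inter_subset_inter_right hsub) le_rfl

theorem sdiff_mrRes_subset (hsub : S2 ⊆ S1) : S2 \ I.mrRes c S2 ⊆ S1 \ I.mrRes c S1 :=
  fun t ht => by
    obtain ⟨htS2, htR2⟩ := mem_sdiff.mp ht
    exact mem_sdiff.mpr ⟨hsub htS2, fun htR1 => htR2 (mem_mrRes_of_subset htR1 htS2 hsub)⟩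

end SchoolChoice

/-- the minority-reserve choice function is substitutable. -/
theorem CMR_substitutable {S C : Type*} [Fintype S] [DecidableEq S] [Fintype C] [DecidableEq C]
    (I : SchoolChoice S C) (c : C) (S1 S2 : Finset S) (s : S)
    (hs : s ∈ I.CMR c S1) (hs2 : s ∈ S2) (hsub : S2 ⊆ S1) :
    s ∈ I.CMR c S2 := by
  rcases mem_union.mp hs with hR1 | hG1
  · exact mem_union_left _ (SchoolChoice.mem_mrRes_of_subset hR1 hs2 hsub)
  by_cases hR2 : s ∈ I.mrRes c S2
  · exact mem_union_left _ hR2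
  exact mem_union_right _ <| I.mem_maxSet_of_subset c hG1 (mem_sdiff.mpr ⟨hs2, hR2⟩)
    (SchoolChoice.sdiff_mrRes_subset hsub)
    (Nat.sub_le_sub_left (SchoolChoice.card_mrRes_le_of_subset hsub) _)
end

section
/- For every school c in a school-choice instance, the joint-seat-allocation choice function C^JSA_c is q_c-acceptant: for every set of students S1, |C^JSA_c(S1)| = min(q_c, |S1|). -/
/-!
Common formalization of school-choice instances with reserved seats
(minority reserve, joint seat allocation, discovery program).

Conventions:
* `prio c s` is the priority rank of student `s` at school `c`
  (smaller value = higher priority); injectivity encodes a strict priority order.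
* `pref s o` is the preference rank of outcome `o : Option C` for student `s`
  (smaller value = more preferred); `none` denotes being unmatched, and a school
  `c` is acceptable to `s` iff `pref s (some c) < pref s none`.
-/

open Finset

/-!
Under an injective priority key, the rank `s ↦ #{t ∈ T | prio c t < prio c s}` maps `T` bijectively onto
`{0, …, #T - 1}`, so `max(T, >_c, k)` has exactly `min k #T` elements. The set
`S1^G ∪ S1^R` lies in `S1` and has at most `q^G + q^R = q` elements, and the last term of
`C^JSA` tops it up from the rest of `S1` to exactly `min q #S1`.
-/

namespace Finset

variable {β α : Type*} [LinearOrder α] {f : β → α} {T : Finset β}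

theorem card_filter_lt_lt_card_filter_lt {s s' : β} (hs : s ∈ T) (h : f s < f s') :
    #{t ∈ T | f t < f s} < #{t ∈ T | f t < f s'} := by
  refine card_lt_card ⟨fun t ht => ?_, fun hsub => ?_⟩
  · simp only [mem_filter] at ht ⊢
    exact ⟨ht.1, ht.2.trans h⟩
  · simpa using hsub (mem_filter.2 ⟨hs, h⟩)

theorem card_filter_lt_lt_card {s : β} (hs : s ∈ T) : #{t ∈ T | f t < f s} < #T :=
  card_lt_card (filter_ssubset.2 ⟨s, hs, lt_irrefl _⟩)

theorem injOn_card_filter_lt (hf : Set.InjOn f T) :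
    Set.InjOn (fun s => #{t ∈ T | f t < f s}) T := by
  intro a ha b hb hab
  by_contra hne
  rcases lt_or_gt_of_ne (hf.ne ha hb hne) with h | h
  · exact (card_filter_lt_lt_card_filter_lt ha h).ne hab
  · exact (card_filter_lt_lt_card_filter_lt hb h).ne hab.symm

theorem image_card_filter_lt_eq_range (hf : Set.InjOn f T) :
    T.image (fun s => #{t ∈ T | f t < f s}) = range #T :=
  eq_of_subset_of_card_le
    (image_subset_iff.2 fun _ hs => mem_range.2 (card_filter_lt_lt_card hs))
    (by rw [card_range, card_image_of_injOn (injOn_card_filter_lt hf)])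

theorem card_filter_card_filter_lt_lt (hf : Set.InjOn f T) (k : ℕ) :
    #{s ∈ T | #{t ∈ T | f t < f s} < k} = min k #T := by
  have hinj := (injOn_card_filter_lt hf).mono
    (coe_subset.2 (filter_subset (fun s => #{t ∈ T | f t < f s} < k) T))
  calc #{s ∈ T | #{t ∈ T | f t < f s} < k}
      = #{n ∈ T.image (fun s => #{t ∈ T | f t < f s}) | n < k} := by
        rw [filter_image, card_image_of_injOn hinj]
    _ = #{n ∈ range #T | n < k} := by rw [image_card_filter_lt_eq_range hf]
    _ = min k #T := by
        rw [← card_range (min k #T)]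
        congr 1
        ext n
        simp [and_comm]

end Finset

namespace SchoolChoice

variable {S C : Type*} [Fintype S] [DecidableEq S] [Fintype C] [DecidableEq C]
  (I : SchoolChoice S C) (c : C)

theorem maxSet_subset (T : Finset S) (k : ℕ) : I.maxSet c T k ⊆ T :=
  filter_subset _ _

theorem card_maxSet_le (T : Finset S) (k : ℕ) : #(I.maxSet c T k) ≤ k :=
  (I.card_maxSet c T k).trans_le (min_le_left _ _)

theorem card_union_maxSet_sdiff {T U : Finset S} {k : ℕ} (hU : U ⊆ T) (hk : #U ≤ k) :
    #(U ∪ I.maxSet c (T \ U) (k - #U)) = min k #T := by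
  have hdisj : Disjoint U (I.maxSet c (T \ U) (k - #U)) :=
    disjoint_left.2 fun _ ha hb => (mem_sdiff.1 (I.maxSet_subset c _ _ hb)).2 ha
  rw [card_union_of_disjoint hdisj, card_maxSet, card_sdiff_of_subset hU]
  have := card_le_card hU
  omega

theorem jsaGen_union_jsaRes_subset (T : Finset S) : I.jsaGen c T ∪ I.jsaRes c T ⊆ T :=
  union_subset (I.maxSet_subset c _ _)
    ((I.maxSet_subset c _ _).trans (sdiff_subset.trans inter_subset_left))

theorem card_jsaGen_union_jsaRes_le (T : Finset S) : #(I.jsaGen c T ∪ I.jsaRes c T) ≤ I.q c := by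
  have hGen : #(I.jsaGen c T) ≤ I.q c - I.qR c := I.card_maxSet_le c _ _
  have hRes : #(I.jsaRes c T) ≤ I.qR c := I.card_maxSet_le c _ _
  have := card_union_le (I.jsaGen c T) (I.jsaRes c T)
  have := I.qR_le c
  omega

end SchoolChoice

/-- the joint-seat-allocation choice function is q_c-acceptant. -/
theorem CJSA_acceptant {S C : Type*} [Fintype S] [DecidableEq S] [Fintype C] [DecidableEq C]
    (I : SchoolChoice S C) (c : C) (S1 : Finset S) :
    (I.CJSA c S1).card = min (I.q c) S1.card :=
  I.card_union_maxSet_sdiff c (I.jsaGen_union_jsaRes_subset c S1)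
    (I.card_jsaGen_union_jsaRes_le c S1)
end

section
/- For every school-choice instance and every student s, the discovery-program assignment equals the projection of the student-optimal stable matching of the DISC auxiliary instance: μ^DISC(s) = ω(μ^DISC-a(s)). -/
/-!
Common formalization of school-choice instances with reserved seats
(minority reserve, joint seat allocation, discovery program).

Conventions:
* `prio c s` is the priority rank of student `s` at school `c`
  (smaller value = higher priority); injectivity encodes a strict priority order.
* `pref s o` is the preference rank of outcome `o : Option C` for student `s`
  (smaller value = more preferred); `none` denotes being unmatched, and a school
  `c` is acceptable to `s` iff `pref s (some c) < pref s none`.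
-/

open Finset

namespace SchoolChoice

variable {S C : Type*} [Fintype S] [DecidableEq S] [Fintype C] [DecidableEq C]

/-! Auxiliary instances: each school `c` is split into `Sum.inl c = c'` (general seats,
quota `q c - qR c`, priority `>_c`) and `Sum.inr c = c''` (reserved seats, quota `qR c`,
priority ranking all disadvantaged students above all advantaged students and each group
by `>_c`). The projection `ω` is `Sum.elim id id`. -/

/-- priority ranks of the auxiliary schools -/
def prioAux (I : SchoolChoice S C) : C ⊕ C → S → ℕ
  | Sum.inl c => I.prio c
  | Sum.inr c => fun t =>
      if t ∈ I.dis then I.prio c t else Finset.univ.sup (I.prio c) + 1 + I.prio c t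

theorem prioAux_inj (I : SchoolChoice S C) (d : C ⊕ C) :
    Function.Injective (I.prioAux d) := by
  cases d with
  | inl c => exact I.prio_inj c
  | inr c =>
    intro t u h
    simp only [prioAux] at h
    have ht := Finset.le_sup (f := I.prio c) (Finset.mem_univ t)
    have hu := Finset.le_sup (f := I.prio c) (Finset.mem_univ u)
    split_ifs at h
    · exact I.prio_inj c h
    · exact absurd h (by omega)
    · exact absurd h (by omega)
    · exact I.prio_inj c (by omega)

/-- JSA auxiliary preferences: `c1' > c1'' > c2' > c2'' > ⋯` -/
def prefJSAAux (I : SchoolChoice S C) (s : S) : Option (C ⊕ C) → ℕ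
  | none => 2 * I.pref s none
  | some (Sum.inl c) => 2 * I.pref s (some c)
  | some (Sum.inr c) => 2 * I.pref s (some c) + 1

theorem prefJSAAux_inj (I : SchoolChoice S C) (s : S) :
    Function.Injective (I.prefJSAAux s) := by
  intro o1 o2 h
  rcases o1 with _ | (c1 | c1) <;> rcases o2 with _ | (c2 | c2) <;>
    simp only [prefJSAAux] at h
  · rfl
  · exact absurd
      (I.pref_inj s (show I.pref s none = I.pref s (some c2) by omega)) (by simp)
  · exact absurd h (by omega)
  · exact absurd
      (I.pref_inj s (show I.pref s (some c1) = I.pref s none by omega)) (by simp)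
  · rw [Option.some.inj
      (I.pref_inj s (show I.pref s (some c1) = I.pref s (some c2) by omega))]
  · exact absurd h (by omega)
  · exact absurd h (by omega)
  · exact absurd h (by omega)
  · rw [Option.some.inj
      (I.pref_inj s (show I.pref s (some c1) = I.pref s (some c2) by omega))]

/-- a bound strictly larger than all preference ranks of student `s` -/
def prefB (I : SchoolChoice S C) (s : S) : ℕ := Finset.univ.sup (I.pref s) + 1

/-- DISC auxiliary preferences: `c1' > ⋯ > ck' > c1'' > ⋯ > ck''`
(acceptable general copies first, then acceptable reserved copies, then being
unmatched, then the copies of unacceptable schools). -/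
def prefDISCAux (I : SchoolChoice S C) (s : S) : Option (C ⊕ C) → ℕ
  | none => 2 * I.prefB s
  | some (Sum.inl c) =>
      if I.pref s (some c) < I.pref s none then I.pref s (some c)
      else 2 * I.prefB s + 1 + I.pref s (some c)
  | some (Sum.inr c) =>
      if I.pref s (some c) < I.pref s none then I.prefB s + I.pref s (some c)
      else 3 * I.prefB s + 1 + I.pref s (some c)

theorem prefDISCAux_inj (I : SchoolChoice S C) (s : S) :
    Function.Injective (I.prefDISCAux s) := by
  have hb : ∀ o : Option C, I.pref s o < I.prefB s := by
    intro o
    have := Finset.le_sup (f := I.pref s) (Finset.mem_univ o)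
    simp only [prefB]
    omega
  intro o1 o2 h
  have hn := hb none
  rcases o1 with _ | (c1 | c1) <;> rcases o2 with _ | (c2 | c2) <;>
    simp only [prefDISCAux] at h <;> try split_ifs at h
  all_goals try rfl
  all_goals
    first
    | exact absurd h (by first
        | (have := hb (some c1); have := hb (some c2); omega)
        | (have := hb (some c1); omega)
        | (have := hb (some c2); omega))
    | rw [Option.some.inj (I.pref_inj s
        (show I.pref s (some c1) = I.pref s (some c2) by
          have := hb (some c1); have := hb (some c2); omega))]

/-- the JSA auxiliary instance -/
def jsaAux (I : SchoolChoice S C) : SchoolChoice S (C ⊕ C) where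
  dis := I.dis
  pref := I.prefJSAAux
  pref_inj := I.prefJSAAux_inj
  prio := I.prioAux
  prio_inj := I.prioAux_inj
  q := Sum.elim (fun c => I.q c - I.qR c) I.qR
  qR := fun _ => 0
  qR_le := fun _ => Nat.zero_le _

/-- the DISC auxiliary instance -/
def discAux (I : SchoolChoice S C) : SchoolChoice S (C ⊕ C) :=
  { I.jsaAux with pref := I.prefDISCAux, pref_inj := I.prefDISCAux_inj }

/-- `ψ⁻¹`: transform a matching of the original instance into a matching of the
JSA auxiliary instance: `μ2(c') = max(μ1(c), >_c, q_c^G)`, `μ2(c'') = μ1(c) \ μ2(c')`. -/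
def psiInv (I : SchoolChoice S C) (μ : S → Option C) (s : S) : Option (C ⊕ C) :=
  match μ s with
  | none => none
  | some c =>
      if s ∈ I.maxSet c (I.assigned μ c) (I.q c - I.qR c) then some (Sum.inl c)
      else some (Sum.inr c)

end SchoolChoice

/-!
In the DISC auxiliary preferences every general copy `c'` comes before every reserved copy
`c''`, so comparing two auxiliary outcomes is lexicographic: first the general seats, then,
between students without a general seat, the reserved seats. Together with the priority of
`c''` (disadvantaged students first), this makes an auxiliary matching `η` stable exactly when
its general part, the reserved part of the disadvantaged students and the reserved part of the
advantaged students are stable in the three stages of the discovery program. Hence the lift of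
`μ^DISC` is stable in the auxiliary instance, so `μ^DISC-a` dominates it, while each stage
matching of `μ^DISC` dominates the corresponding part of `μ^DISC-a`; strict preferences turn
the two dominations into equality, one stage after the other.
-/
namespace SchoolChoice

section Parts

variable {S C : Type*}

def genPart (η : S → Option (C ⊕ C)) (t : S) : Option C :=
  (η t).bind Sum.getLeft?

def resPart (D : S → Prop) [DecidablePred D] (η : S → Option (C ⊕ C)) (t : S) : Option C :=
  if D t then (η t).bind Sum.getRight? else none

def ofStages (μ1 μ2 μ3 : S → Option C) (t : S) : Option (C ⊕ C) :=
  ((μ1 t).map Sum.inl).or (((μ2 t).or (μ3 t)).map Sum.inr)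

variable (D : S → Prop) [DecidablePred D] {η : S → Option (C ⊕ C)} {t : S} {c : C}

@[simp]
lemma genPart_eq_some : genPart η t = some c ↔ η t = some (Sum.inl c) := by
  unfold genPart
  rcases η t with _ | (c' | c') <;> simp

@[simp]
lemma resPart_eq_some : resPart D η t = some c ↔ D t ∧ η t = some (Sum.inr c) := by
  unfold resPart
  split_ifs with h <;> rcases η t with _ | (c' | c') <;> simp [h]

lemma resPart_of_pos (h : D t) : resPart D η t = (η t).bind Sum.getRight? := if_pos h

lemma resPart_eq_none (h : ¬(D t ∧ genPart η t = none)) : resPart D η t = none := by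
  unfold genPart at h
  unfold resPart
  generalize η t = o at *
  rcases o with _ | (c' | c') <;> simp_all

lemma map_ofStages (μ1 μ2 μ3 : S → Option C) :
    (ofStages μ1 μ2 μ3 t).map (Sum.elim id id) =
      Option.elim (μ1 t) (Option.elim (μ2 t) (μ3 t) some) some := by
  unfold ofStages
  rcases μ1 t with _ | c1 <;> rcases μ2 t with _ | c2 <;> rcases μ3 t with _ | c3 <;> rfl

end Parts

variable {S C : Type*} [Fintype S] [DecidableEq S] [Fintype C] [DecidableEq C]

section Assigned

variable {I : SchoolChoice S C} {η : S → Option (C ⊕ C)} {c : C}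

lemma mem_assigned {μ : S → Option C} {s : S} : s ∈ I.assigned μ c ↔ μ s = some c := by
  simp [assigned]

lemma assigned_genPart : I.assigned (genPart η) c = I.discAux.assigned η (Sum.inl c) := by
  ext t
  simp [mem_assigned]

lemma assigned_resPart (D : S → Prop) [DecidablePred D] :
    I.assigned (resPart D η) c = (I.discAux.assigned η (Sum.inr c)).filter D := by
  ext t
  simp [mem_assigned, and_comm]

end Assigned

lemma ofStages_parts (I : SchoolChoice S C) (η : S → Option (C ⊕ C)) :
    ofStages (genPart η) (resPart (· ∈ I.dis) η) (resPart (· ∉ I.dis) η) = η := by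
  funext t
  unfold ofStages genPart resPart
  by_cases h : t ∈ I.dis <;> rcases η t with _ | (c' | c') <;> simp [h]

section AuxiliaryInstance

variable (I : SchoolChoice S C) (s : S)

lemma pref_lt_prefB (o : Option C) : I.pref s o < I.prefB s :=
  Nat.lt_succ_of_le (Finset.le_sup (Finset.mem_univ o))

lemma discAux_pref_none : I.discAux.pref s none = 2 * I.prefB s := rfl

@[simp]
lemma discAux_q_inl (c : C) : I.discAux.q (Sum.inl c) = I.q c - I.qR c := rfl

@[simp]
lemma discAux_q_inr (c : C) : I.discAux.q (Sum.inr c) = I.qR c := rfl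

variable {s}

lemma discAux_pref_inl {c : C} (h : I.acceptable s c) :
    I.discAux.pref s (some (Sum.inl c)) = I.pref s (some c) := if_pos h

lemma discAux_pref_inr {c : C} (h : I.acceptable s c) :
    I.discAux.pref s (some (Sum.inr c)) = I.prefB s + I.pref s (some c) := if_pos h

@[simp]
lemma discAux_acceptable_inl (c : C) :
    I.discAux.acceptable s (Sum.inl c) ↔ I.acceptable s c := by
  have := I.pref_lt_prefB s (some c)
  simp only [acceptable, discAux, prefDISCAux]
  split_ifs <;> omega

@[simp]
lemma discAux_acceptable_inr (c : C) :
    I.discAux.acceptable s (Sum.inr c) ↔ I.acceptable s c := by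
  have := I.pref_lt_prefB s (some c)
  simp only [acceptable, discAux, prefDISCAux]
  split_ifs <;> omega

theorem discAux_pref_lt_iff {o o' : Option (C ⊕ C)}
    (ho : ∀ d ∈ o, I.discAux.acceptable s d) (ho' : ∀ d ∈ o', I.discAux.acceptable s d) :
    I.discAux.pref s o < I.discAux.pref s o' ↔
      I.pref s (o.bind Sum.getLeft?) < I.pref s (o'.bind Sum.getLeft?) ∨
        o.bind Sum.getLeft? = none ∧ o'.bind Sum.getLeft? = none ∧
          I.pref s (o.bind Sum.getRight?) < I.pref s (o'.bind Sum.getRight?) := by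
  have hB := I.pref_lt_prefB s
  rcases o with _ | (c | c) <;> rcases o' with _ | (c' | c') <;>
    simp only [Option.mem_def, Option.some.injEq, forall_eq', discAux_acceptable_inl,
      discAux_acceptable_inr, reduceCtorEq, false_imp_iff, imp_true_iff] at ho ho' <;>
    simp [discAux_pref_none, discAux_pref_inl, discAux_pref_inr, *] <;>
    simp only [acceptable] at * <;>
    grind

end AuxiliaryInstance

section ReservedSeats

variable (I : SchoolChoice S C) {s : S} (c : C)

lemma prioAux_inr_lt_iff_of_mem_dis (hs : s ∈ I.dis) (t : S) :
    I.prioAux (Sum.inr c) t < I.prioAux (Sum.inr c) s ↔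
      t ∈ I.dis ∧ I.prio c t < I.prio c s := by
  have := Finset.le_sup (f := I.prio c) (Finset.mem_univ s)
  simp only [prioAux, if_pos hs]
  split_ifs with ht <;> simp [ht]; omega

lemma prioAux_inr_lt_iff_of_notMem_dis (hs : s ∉ I.dis) (t : S) :
    I.prioAux (Sum.inr c) t < I.prioAux (Sum.inr c) s ↔
      t ∈ I.dis ∨ I.prio c t < I.prio c s := by
  have := Finset.le_sup (f := I.prio c) (Finset.mem_univ t)
  simp only [prioAux, if_neg hs]
  split_ifs with ht <;> simp [ht]; omega

lemma discAux_prio : I.discAux.prio = I.prioAux := rfl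

variable {c} {T : Finset S} {k : ℕ}

lemma mem_discAux_maxSet_inr_of_mem_dis (hs : s ∈ I.dis) :
    s ∈ I.discAux.maxSet (Sum.inr c) T k ↔ s ∈ I.maxSet c (T.filter (· ∈ I.dis)) k := by
  have hhigher : (T.filter fun t => I.prioAux (Sum.inr c) t < I.prioAux (Sum.inr c) s) =
      (T.filter (· ∈ I.dis)).filter fun t => I.prio c t < I.prio c s := by
    rw [Finset.filter_filter]
    exact Finset.filter_congr fun t _ => I.prioAux_inr_lt_iff_of_mem_dis c hs t
  unfold maxSet
  rw [Finset.mem_filter, Finset.mem_filter, Finset.mem_filter, discAux_prio, hhigher]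
  simp [hs]

lemma mem_discAux_maxSet_inr_of_notMem_dis (hs : s ∉ I.dis) (hsT : s ∈ T) :
    s ∈ I.discAux.maxSet (Sum.inr c) T k ↔
      s ∈ I.maxSet c (T.filter (· ∉ I.dis)) (k - (T.filter (· ∈ I.dis)).card) := by
  unfold maxSet
  rw [Finset.mem_filter, Finset.mem_filter, Finset.mem_filter, discAux_prio]
  set higher := T.filter fun t => I.prioAux (Sum.inr c) t < I.prioAux (Sum.inr c) s
  have hdis : higher.filter (· ∈ I.dis) = T.filter (· ∈ I.dis) := by
    rw [Finset.filter_filter]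
    exact Finset.filter_congr fun t _ => by
      rw [I.prioAux_inr_lt_iff_of_notMem_dis c hs t]; tauto
  have hadv : higher.filter (· ∉ I.dis) =
      (T.filter (· ∉ I.dis)).filter fun t => I.prio c t < I.prio c s := by
    rw [Finset.filter_filter, Finset.filter_filter]
    exact Finset.filter_congr fun t _ => by
      rw [I.prioAux_inr_lt_iff_of_notMem_dis c hs t]; tauto
  have hcount := Finset.card_filter_add_card_filter_not (s := higher) (p := (· ∈ I.dis))
  rw [hdis, hadv] at hcount
  simp only [hsT, hs, not_false_eq_true, and_self, true_and]
  omega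

end ReservedSeats

section Stages

variable (I : SchoolChoice S C)

def StagesStable (μ1 μ2 μ3 : S → Option C) : Prop :=
  I.IsStableOn univ (fun c => I.q c - I.qR c) μ1 ∧
    I.IsStableOn (I.dis.filter fun s => μ1 s = none) I.qR μ2 ∧
    I.IsStableOn ((univ \ I.dis).filter fun s => μ1 s = none)
      (fun c => I.qR c - (I.assigned μ2 c).card) μ3

variable {I} {s : S} {c : C} {o : Option (C ⊕ C)}

lemma discAux_pref_inl_lt_iff (hc : I.acceptable s c) (ho : ∀ d ∈ o, I.discAux.acceptable s d) :
    I.discAux.pref s (some (Sum.inl c)) < I.discAux.pref s o ↔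
      I.pref s (some c) < I.pref s (o.bind Sum.getLeft?) := by
  rw [I.discAux_pref_lt_iff (by simpa) ho]
  simp

lemma discAux_pref_inr_lt_iff (hc : I.acceptable s c) (ho : ∀ d ∈ o, I.discAux.acceptable s d) :
    I.discAux.pref s (some (Sum.inr c)) < I.discAux.pref s o ↔
      o.bind Sum.getLeft? = none ∧ I.pref s (some c) < I.pref s (o.bind Sum.getRight?) := by
  rw [I.discAux_pref_lt_iff (by simpa) ho]
  rcases o with _ | (c' | c')
  · simp
  · have : I.acceptable s c' := by simpa using ho _ rfl
    simpa using not_lt.2 this.le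
  · simp

variable {η : S → Option (C ⊕ C)}

lemma discAux_blocks_inl_iff (hc : I.acceptable s c)
    (hη : ∀ d ∈ η s, I.discAux.acceptable s d) :
    I.discAux.pref s (some (Sum.inl c)) < I.discAux.pref s (η s) ∧
        s ∈ I.discAux.CBASE (Sum.inl c) (insert s (I.discAux.assigned η (Sum.inl c))) ↔
      I.pref s (some c) < I.pref s (genPart η s) ∧
        s ∈ I.maxSet c (insert s (I.assigned (genPart η) c)) (I.q c - I.qR c) := by
  rw [discAux_pref_inl_lt_iff hc hη, assigned_genPart]
  rfl

lemma discAux_blocks_inr_iff_of_mem_dis (hs : s ∈ I.dis) (hc : I.acceptable s c)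
    (hη : ∀ d ∈ η s, I.discAux.acceptable s d) :
    I.discAux.pref s (some (Sum.inr c)) < I.discAux.pref s (η s) ∧
        s ∈ I.discAux.CBASE (Sum.inr c) (insert s (I.discAux.assigned η (Sum.inr c))) ↔
      genPart η s = none ∧ I.pref s (some c) < I.pref s (resPart (· ∈ I.dis) η s) ∧
        s ∈ I.maxSet c (insert s (I.assigned (resPart (· ∈ I.dis) η) c)) (I.qR c) := by
  rw [discAux_pref_inr_lt_iff hc hη, CBASE, I.mem_discAux_maxSet_inr_of_mem_dis hs,
    Finset.filter_insert, if_pos hs, assigned_resPart, resPart_of_pos (· ∈ I.dis) hs, and_assoc]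
  rfl

lemma discAux_blocks_inr_iff_of_notMem_dis (hs : s ∉ I.dis) (hc : I.acceptable s c)
    (hη : ∀ d ∈ η s, I.discAux.acceptable s d) :
    I.discAux.pref s (some (Sum.inr c)) < I.discAux.pref s (η s) ∧
        s ∈ I.discAux.CBASE (Sum.inr c) (insert s (I.discAux.assigned η (Sum.inr c))) ↔
      genPart η s = none ∧ I.pref s (some c) < I.pref s (resPart (· ∉ I.dis) η s) ∧
        s ∈ I.maxSet c (insert s (I.assigned (resPart (· ∉ I.dis) η) c))
          (I.qR c - (I.assigned (resPart (· ∈ I.dis) η) c).card) := by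
  rw [discAux_pref_inr_lt_iff hc hη, CBASE,
    I.mem_discAux_maxSet_inr_of_notMem_dis hs (Finset.mem_insert_self _ _),
    Finset.filter_insert, if_pos hs, Finset.filter_insert, if_neg hs, assigned_resPart,
    assigned_resPart, resPart_of_pos (· ∉ I.dis) hs, and_assoc]
  rfl

theorem discAux_isMatching_iff :
    I.discAux.IsMatching η ↔
      I.IsMatchingOn univ (fun c => I.q c - I.qR c) (genPart η) ∧
      I.IsMatchingOn (I.dis.filter fun s => genPart η s = none) I.qR (resPart (· ∈ I.dis) η) ∧
      I.IsMatchingOn ((univ \ I.dis).filter fun s => genPart η s = none)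
        (fun c => I.qR c - (I.assigned (resPart (· ∈ I.dis) η) c).card)
        (resPart (· ∉ I.dis) η) := by
  have hsplit : ∀ c, (I.discAux.assigned η (Sum.inr c)).card =
      (I.assigned (resPart (· ∈ I.dis) η) c).card +
        (I.assigned (resPart (· ∉ I.dis) η) c).card := fun c => by
    rw [assigned_resPart, assigned_resPart, Finset.card_filter_add_card_filter_not]
  constructor
  · rintro ⟨hacc, hq⟩
    have hqR c := (hsplit c).symm.trans_le (hq (Sum.inr c))
    refine ⟨⟨by simp, fun s c h => by simpa using hacc s _ (genPart_eq_some.1 h),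
        fun c => by simpa [assigned_genPart] using hq (Sum.inl c)⟩,
      ⟨fun s hs => resPart_eq_none _ (by simpa using hs),
        fun s c h => by simpa using hacc s _ ((resPart_eq_some _).1 h).2,
        fun c => le_of_add_le_left (hqR c)⟩,
      ⟨fun s hs => resPart_eq_none _ (by simpa using hs),
        fun s c h => by simpa using hacc s _ ((resPart_eq_some _).1 h).2,
        fun c => Nat.le_sub_of_add_le' (hqR c)⟩⟩
  · rintro ⟨⟨-, hacc1, hq1⟩, ⟨-, hacc2, hq2⟩, ⟨-, hacc3, hq3⟩⟩
    refine ⟨?_, ?_⟩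
    · rintro s (c | c) h
      · simpa using hacc1 s c (genPart_eq_some.2 h)
      · by_cases hs : s ∈ I.dis
        · simpa using hacc2 s c ((resPart_eq_some _).2 ⟨hs, h⟩)
        · simpa using hacc3 s c ((resPart_eq_some _).2 ⟨hs, h⟩)
    · rintro (c | c)
      · simpa [assigned_genPart] using hq1 c
      · have := hq2 c
        have : _ ≤ _ - _ := hq3 c
        rw [hsplit, discAux_q_inr]
        omega

theorem discAux_isStable_iff :
    I.discAux.IsStable I.discAux.CBASE η ↔
      I.StagesStable (genPart η) (resPart (· ∈ I.dis) η) (resPart (· ∉ I.dis) η) := by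
  constructor
  · rintro ⟨hm, hb⟩
    obtain ⟨hm1, hm2, hm3⟩ := discAux_isMatching_iff.1 hm
    refine ⟨⟨hm1, ?_⟩, ⟨hm2, ?_⟩, ⟨hm3, ?_⟩⟩
    · intro s _ c hc hlt hmem
      obtain ⟨hlt', hmem'⟩ := (discAux_blocks_inl_iff hc (hm.1 s)).2 ⟨hlt, hmem⟩
      exact hb s _ (by simpa) hlt' hmem'
    · intro s hs c hc hlt hmem
      obtain ⟨hs, hg⟩ := Finset.mem_filter.1 hs
      obtain ⟨hlt', hmem'⟩ :=
        (discAux_blocks_inr_iff_of_mem_dis hs hc (hm.1 s)).2 ⟨hg, hlt, hmem⟩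
      exact hb s _ (by simpa) hlt' hmem'
    · intro s hs c hc hlt hmem
      obtain ⟨hs, hg⟩ := Finset.mem_filter.1 hs
      obtain ⟨hlt', hmem'⟩ :=
        (discAux_blocks_inr_iff_of_notMem_dis (Finset.mem_sdiff.1 hs).2 hc (hm.1 s)).2
          ⟨hg, hlt, hmem⟩
      exact hb s _ (by simpa) hlt' hmem'
  · rintro ⟨⟨hm1, hb1⟩, ⟨hm2, hb2⟩, ⟨hm3, hb3⟩⟩
    have hm := discAux_isMatching_iff.2 ⟨hm1, hm2, hm3⟩
    refine ⟨hm, ?_⟩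
    rintro s (c | c) hc hlt hmem
    · rw [discAux_acceptable_inl] at hc
      obtain ⟨hlt', hmem'⟩ := (discAux_blocks_inl_iff hc (hm.1 s)).1 ⟨hlt, hmem⟩
      exact hb1 s (Finset.mem_univ s) c hc hlt' hmem'
    · rw [discAux_acceptable_inr] at hc
      by_cases hs : s ∈ I.dis
      · obtain ⟨hg, hlt', hmem'⟩ :=
          (discAux_blocks_inr_iff_of_mem_dis hs hc (hm.1 s)).1 ⟨hlt, hmem⟩
        exact hb2 s (Finset.mem_filter.2 ⟨hs, hg⟩) c hc hlt' hmem'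
      · obtain ⟨hg, hlt', hmem'⟩ :=
          (discAux_blocks_inr_iff_of_notMem_dis hs hc (hm.1 s)).1 ⟨hlt, hmem⟩
        exact hb3 s (by simp [hs, hg]) c hc hlt' hmem'

end Stages

section Comparison

variable {I : SchoolChoice S C}

lemma StagesStable.parts_ofStages {μ1 μ2 μ3 : S → Option C} (h : I.StagesStable μ1 μ2 μ3) :
    genPart (ofStages μ1 μ2 μ3) = μ1 ∧ resPart (· ∈ I.dis) (ofStages μ1 μ2 μ3) = μ2 ∧
      resPart (· ∉ I.dis) (ofStages μ1 μ2 μ3) = μ3 := by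
  obtain ⟨-, ⟨⟨h2, -⟩, -⟩, ⟨⟨h3, -⟩, -⟩⟩ := h
  refine ⟨funext fun t => ?_, funext fun t => ?_, funext fun t => ?_⟩ <;>
  · have h2t := h2 t
    have h3t := h3 t
    simp only [Finset.mem_filter, Finset.mem_sdiff, Finset.mem_univ, true_and] at h2t h3t
    simp only [ofStages, genPart, resPart]
    generalize μ1 t = a1, μ2 t = a2, μ3 t = a3 at *
    by_cases ht : t ∈ I.dis <;> rcases a1 with _ | c1 <;> rcases a2 with _ | c2 <;>
      rcases a3 with _ | c3 <;> simp_all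

lemma StagesStable.isStable_ofStages {μ1 μ2 μ3 : S → Option C}
    (h : I.StagesStable μ1 μ2 μ3) :
    I.discAux.IsStable I.discAux.CBASE (ofStages μ1 μ2 μ3) := by
  obtain ⟨h1, h2, h3⟩ := h.parts_ofStages
  rw [discAux_isStable_iff, h1, h2, h3]
  exact h

lemma IsOptStableOn.eq_of_forall_pref_le {A : Finset S} {q' : C → ℕ} {μ α : S → Option C}
    (hμ : I.IsOptStableOn A q' μ) (hα : I.IsStableOn A q' α)
    (h : ∀ s ∈ A, I.pref s (α s) ≤ I.pref s (μ s)) : μ = α := by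
  funext s
  by_cases hs : s ∈ A
  · exact I.pref_inj s (le_antisymm (hμ.2 α hα s hs) (h s hs))
  · rw [hμ.1.1.1 s hs, hα.1.1 s hs]

variable {s : S} {η η' : S → Option (C ⊕ C)}

lemma pref_genPart_le_of_discAux_pref_le (hη : ∀ d ∈ η s, I.discAux.acceptable s d)
    (hη' : ∀ d ∈ η' s, I.discAux.acceptable s d)
    (h : I.discAux.pref s (η s) ≤ I.discAux.pref s (η' s)) :
    I.pref s (genPart η s) ≤ I.pref s (genPart η' s) :=
  not_lt.1 (not_or.1 (mt (I.discAux_pref_lt_iff hη' hη).2 h.not_gt)).1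

lemma pref_resPart_le_of_discAux_pref_le (D : S → Prop) [DecidablePred D]
    (hη : ∀ d ∈ η s, I.discAux.acceptable s d) (hη' : ∀ d ∈ η' s, I.discAux.acceptable s d)
    (hg : genPart η s = none) (hg' : genPart η' s = none)
    (h : I.discAux.pref s (η s) ≤ I.discAux.pref s (η' s)) :
    I.pref s (resPart D η s) ≤ I.pref s (resPart D η' s) := by
  have hr := (not_or.1 (mt (I.discAux_pref_lt_iff hη' hη).2 h.not_gt)).2
  unfold resPart
  split_ifs
  · exact not_lt.1 fun hlt => hr ⟨hg', hg, hlt⟩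
  · exact le_rfl

end Comparison

end SchoolChoice

open SchoolChoice in
/-- the discovery-program assignment equals the projection of the
student-optimal stable matching of the DISC auxiliary instance. -/
theorem DISC_aux_equivalence {S C : Type*} [Fintype S] [DecidableEq S] [Fintype C] [DecidableEq C]
    (I : SchoolChoice S C) (μD : S → Option C) (μA : S → Option (C ⊕ C))
    (hD : I.IsDisc μD)
    (hA : I.discAux.IsOptStable I.discAux.CBASE μA) :
    ∀ s : S, μD s = (μA s).map (Sum.elim id id) := by
  obtain ⟨μ1, μ2, μ3, h1, h2, h3, hμD⟩ := hD
  have hstages : I.StagesStable μ1 μ2 μ3 := ⟨h1.1, h2.1, h3.1⟩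
  set ν := ofStages μ1 μ2 μ3
  obtain ⟨hν1, hν2, hν3⟩ := hstages.parts_ofStages
  have hν := hstages.isStable_ofStages
  have hdom s : I.discAux.pref s (μA s) ≤ I.discAux.pref s (ν s) := hA.2 ν hν s
  have hAacc := hA.1.1.1
  have hνacc := hν.1.1
  obtain ⟨hA1, hA2, hA3⟩ := (I.discAux_isStable_iff).1 hA.1
  have e1 : μ1 = genPart μA := h1.eq_of_forall_pref_le hA1 fun s _ =>
    hν1 ▸ pref_genPart_le_of_discAux_pref_le (hAacc s) (hνacc s) (hdom s)
  have hres (D : S → Prop) [DecidablePred D] s (hs : μ1 s = none) :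
      I.pref s (resPart D μA s) ≤ I.pref s (resPart D ν s) :=
    pref_resPart_le_of_discAux_pref_le D (hAacc s) (hνacc s) (e1 ▸ hs) (hν1 ▸ hs) (hdom s)
  have e2 : μ2 = resPart (· ∈ I.dis) μA := h2.eq_of_forall_pref_le (e1 ▸ hA2) fun s hs =>
    hν2 ▸ hres _ s (Finset.mem_filter.1 hs).2
  have e3 : μ3 = resPart (· ∉ I.dis) μA := h3.eq_of_forall_pref_le (e2 ▸ e1 ▸ hA3) fun s hs =>
    hν3 ▸ hres _ s (Finset.mem_filter.1 hs).2
  intro s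
  rw [hμD, ← congrFun (ofStages_parts I μA) s, map_ofStages, e1, e2, e3]
end
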